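/- arXiv:2102.09677 — 2 statements merged into one kernel-verified Lean document; each statement's English description precedes it below -/
import Mathlib

section
/- CLEVER-Q robustness lower bound (Theorem 1). Let p ≥ 1, let the state space be ℝ^n with the ℓp norm, let A be a finite nonempty action type, let Q : ℝ^n → A → ℝ be a Q-network, let s be a state, and let R > 0. Let A* = {a : Q s a = max_b Q s b} be the greedy action set at s, and assume there exists an action not in A*. For each action a ∉ A*, assume the margin function g_a(x) = (max_{a' ∈ A*} Q x a') − Q x a is Lipschitz with constant L_a > 0 (with respect to the ℓp norm) on the closed ℓp-ball of radius R centered at s. Define β_L = min_{a ∉ A*} g_a(s) / L_a. Then for every perturbation δ ∈ ℝ^n with ‖δ‖_p ≤ min(β_L, R), the greedy set at s is still optimal at s + δ, i.e. max_{a' ∈ A*} Q (s+δ) a' = max_{a ∈ A} Q (s+δ) a. -/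
open scoped ENNReal

/-- CLEVER-Q robustness lower bound (Theorem 1). -/
theorem clever_q_lower_bound
    (p : ℝ≥0∞) [Fact (1 ≤ p)]
    {n : ℕ} {A : Type*} [Fintype A] [Nonempty A]
    (Q : PiLp p (fun _ : Fin n => ℝ) → A → ℝ)
    (s : PiLp p (fun _ : Fin n => ℝ)) (R : ℝ) (hR : 0 < R)
    (Astar : Set A) (hAstar : Astar = {a | Q s a = ⨆ b, Q s b})
    (hne : ∃ a, a ∉ Astar)
    (g : A → PiLp p (fun _ : Fin n => ℝ) → ℝ)
    (hg : ∀ a, g a = fun x => (⨆ a' : Astar, Q x (a' : A)) - Q x a)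
    (L : A → ℝ) (hL : ∀ a ∉ Astar, 0 < L a)
    (hLip : ∀ a ∉ Astar, ∀ x ∈ Metric.closedBall s R, ∀ y ∈ Metric.closedBall s R,
      |g a x - g a y| ≤ L a * ‖x - y‖)
    (βL : ℝ) (hβL : βL = ⨅ a : {a : A // a ∉ Astar}, g (a : A) s / L (a : A))
    (δ : PiLp p (fun _ : Fin n => ℝ)) (hδ : ‖δ‖ ≤ min βL R) :
    (⨆ a' : Astar, Q (s + δ) (a' : A)) = ⨆ a, Q (s + δ) a := by
  classical
  obtain ⟨amax, hamax⟩ := Finite.exists_max (Q s)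
  have hsup : Q s amax = ⨆ b, Q s b :=
    le_antisymm (le_ciSup (Set.finite_range _).bddAbove amax) (ciSup_le hamax)
  have hmem : amax ∈ Astar := by rw [hAstar]; exact hsup
  haveI : Nonempty Astar := ⟨⟨amax, hmem⟩⟩
  haveI hne' : Nonempty {a : A // a ∉ Astar} := ⟨⟨hne.choose, hne.choose_spec⟩⟩
  have hδR : ‖δ‖ ≤ R := le_trans hδ (min_le_right _ _)
  have hδβ : ‖δ‖ ≤ βL := le_trans hδ (min_le_left _ _)
  have hball : s + δ ∈ Metric.closedBall s R := by
    rw [Metric.mem_closedBall, dist_eq_norm]; simpa using hδR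
  have hsball : s ∈ Metric.closedBall s R := Metric.mem_closedBall_self hR.le
  have hg0 : ∀ a ∉ Astar, 0 ≤ g a (s + δ) := by
    intro a ha
    have hLa := hL a ha
    have hβle : βL ≤ g a s / L a := by
      rw [hβL]
      exact ciInf_le (Set.finite_range _).bddBelow (⟨a, ha⟩ : {a : A // a ∉ Astar})
    have h1 : |g a (s + δ) - g a s| ≤ L a * ‖δ‖ := by
      have := hLip a ha (s + δ) hball s hsball
      simpa using this
    have h2 := (abs_le.mp h1).1
    have h3 : L a * ‖δ‖ ≤ g a s := by
      have hm : L a * ‖δ‖ ≤ L a * (g a s / L a) :=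
        mul_le_mul_of_nonneg_left (hδβ.trans hβle) hLa.le
      have he : L a * (g a s / L a) = g a s := by field_simp
      linarith
    linarith
  have hbdd : BddAbove (Set.range fun a : A => Q (s + δ) a) := (Set.finite_range _).bddAbove
  apply le_antisymm
  · exact ciSup_le fun a' => le_ciSup hbdd (a' : A)
  · refine ciSup_le fun a => ?_
    by_cases ha : a ∈ Astar
    · exact le_ciSup (f := fun a' : Astar => Q (s + δ) (a' : A)) (Set.finite_range _).bddAbove (⟨a, ha⟩ : Astar)
    · have h0 := hg0 a ha
      rw [hg] at h0
      simp only at h0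
      linarith
end

section
/- Strict CLEVER-Q bound: preservation of the whole argmax set. Under the same setup as Theorem 1 (p ≥ 1, ℝ^n with the ℓp norm, finite nonempty action type A, Q : ℝ^n → A → ℝ, reference state s, radius R > 0, greedy set A* nonproper, for each a ∉ A* the margin g_a Lipschitz with constant L_a > 0 on the closed ℓp-ball of radius R around s, and β_L = min_{a ∉ A*} g_a(s)/L_a), if the perturbation δ satisfies ‖δ‖_p < β_L and ‖δ‖_p ≤ R, then every greedy action at the perturbed state lies in A*: {a : Q (s+δ) a = max_b Q (s+δ) b} ⊆ A*. -/
open scoped ENNReal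

/-- Strict CLEVER-Q bound: preservation of the whole argmax set. -/
theorem clever_q_strict_argmax_subset
    (p : ℝ≥0∞) [Fact (1 ≤ p)]
    {n : ℕ} {A : Type*} [Fintype A] [Nonempty A]
    (Q : PiLp p (fun _ : Fin n => ℝ) → A → ℝ)
    (s : PiLp p (fun _ : Fin n => ℝ)) (R : ℝ) (hR : 0 < R)
    (Astar : Set A) (hAstar : Astar = {a | Q s a = ⨆ b, Q s b})
    (hne : ∃ a, a ∉ Astar)
    (g : A → PiLp p (fun _ : Fin n => ℝ) → ℝ)
    (hg : ∀ a, g a = fun x => (⨆ a' : Astar, Q x (a' : A)) - Q x a)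
    (L : A → ℝ) (hL : ∀ a ∉ Astar, 0 < L a)
    (hLip : ∀ a ∉ Astar, ∀ x ∈ Metric.closedBall s R, ∀ y ∈ Metric.closedBall s R,
      |g a x - g a y| ≤ L a * ‖x - y‖)
    (βL : ℝ) (hβL : βL = ⨅ a : {a : A // a ∉ Astar}, g (a : A) s / L (a : A))
    (δ : PiLp p (fun _ : Fin n => ℝ)) (hδ : ‖δ‖ < βL) (hδR : ‖δ‖ ≤ R) :
    {a : A | Q (s + δ) a = ⨆ b, Q (s + δ) b} ⊆ Astar := by
  -- Astar is nonempty: a maximizer of Q s exists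
  obtain ⟨a0, ha0⟩ := Finite.exists_max (Q s)
  have ha0eq : Q s a0 = ⨆ b, Q s b :=
    le_antisymm (le_ciSup (Finite.bddAbove_range _) a0) (ciSup_le ha0)
  have ha0' : a0 ∈ Astar := by rw [hAstar]; exact ha0eq
  haveI : Nonempty Astar := ⟨⟨a0, ha0'⟩⟩
  haveI : Nonempty {a : A // a ∉ Astar} := ⟨⟨hne.choose, hne.choose_spec⟩⟩
  intro a ha
  by_contra haA
  -- g a s > 0
  have hgs : 0 < g a s := by
    rw [hg]
    simp only [sub_pos]
    have h1 : Q s a < Q s a0 := by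
      rcases lt_or_eq_of_le (ha0 a) with h | h
      · exact h
      · exact absurd (show a ∈ Astar by rw [hAstar]; exact h.trans ha0eq) haA
    calc Q s a < Q s a0 := h1
      _ ≤ ⨆ a' : Astar, Q s (a' : A) :=
        le_ciSup (f := fun a' : Astar => Q s (a' : A)) (Finite.bddAbove_range _) ⟨a0, ha0'⟩
  have hLa := hL a haA
  -- βL ≤ g a s / L a
  have hβle : βL ≤ g a s / L a := by
    rw [hβL]
    exact ciInf_le (Finite.bddBelow_range _) (⟨a, haA⟩ : {a : A // a ∉ Astar})
  have hlt : L a * ‖δ‖ < g a s := by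
    have := lt_of_lt_of_le hδ hβle
    rwa [lt_div_iff₀ hLa, mul_comm] at this
  -- s + δ is in the ball
  have hmem : s + δ ∈ Metric.closedBall s R := by
    rw [Metric.mem_closedBall, dist_eq_norm]
    simpa using hδR
  have hsmem : s ∈ Metric.closedBall s R := Metric.mem_closedBall_self hR.le
  have hlip := hLip a haA (s + δ) hmem s hsmem
  have hnorm : ‖s + δ - s‖ = ‖δ‖ := by rw [add_sub_cancel_left]
  rw [hnorm] at hlip
  have hgpos : 0 < g a (s + δ) := by
    have h1 : g a s - g a (s + δ) ≤ L a * ‖δ‖ := by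
      have := neg_le_of_abs_le hlip
      linarith
    linarith
  -- but a is a maximizer at s + δ, so g a (s+δ) ≤ 0
  have hsup : (⨆ a' : Astar, Q (s + δ) (a' : A)) ≤ ⨆ b, Q (s + δ) b :=
    ciSup_le fun a' => le_ciSup (Finite.bddAbove_range _) (a' : A)
  have : g a (s + δ) ≤ 0 := by
    rw [hg]
    simp only
    have : Q (s + δ) a = ⨆ b, Q (s + δ) b := ha
    linarith
  linarith
end
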